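/- Let x = a_1 e_1 + ⋯ + a_n e_n + a c be in normal form with a ≥ 0. Then: (1) S_x = (∏_{i=1}^n x_i^{a_i})·S_{ac}, i.e., S_x is the image of S_{ac} under multiplication by the monomial ∏_{i=1}^n x_i^{a_i}, and S_{x+mc} = S_x · S_{mc} for every integer m ≥ 0; (2) S_{ac} is an (a+1)-dimensional ℂ-vector space, with basis the images of the monomials t_0^ℓ t_1^{a−ℓ} for 0 ≤ ℓ ≤ a. -/

import Mathlib

noncomputable section

open MvPolynomial

def LRel (ι : Type) [DecidableEq ι] (p : ι → ℕ) : AddSubgroup (Option ι → ℤ) :=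
  AddSubgroup.closure
    { v | ∃ i : ι, v = (p i : ℤ) • Pi.single (some i) 1 - Pi.single (none : Option ι) 1 }

abbrev LGroup (ι : Type) [DecidableEq ι] (p : ι → ℕ) : Type :=
  (Option ι → ℤ) ⧸ LRel ι p

def egen {ι : Type} [DecidableEq ι] (p : ι → ℕ) (i : ι) : LGroup ι p :=
  QuotientAddGroup.mk (Pi.single (some i) 1)

def cgen {ι : Type} [DecidableEq ι] (p : ι → ℕ) : LGroup ι p :=
  QuotientAddGroup.mk (Pi.single (none : Option ι) 1)

def Lplus {ι : Type} [DecidableEq ι] (p : ι → ℕ) : AddSubmonoid (LGroup ι p) :=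
  AddSubmonoid.closure (Set.range (egen p))

abbrev SPoly (ι : Type) : Type := MvPolynomial (ι ⊕ Fin 2) ℂ

def SIdl (ι : Type) (p : ι → ℕ) (c0 c1 : ι → ℂ) : Ideal (SPoly ι) :=
  Ideal.span { f | ∃ i : ι,
    f = X (Sum.inl i) ^ (p i) - (C (c0 i) * X (Sum.inr 0) + C (c1 i) * X (Sum.inr 1)) }

abbrev SAlg (ι : Type) (p : ι → ℕ) (c0 c1 : ι → ℂ) : Type := SPoly ι ⧸ SIdl ι p c0 c1

def wtA {ι : Type} [Fintype ι] [DecidableEq ι] (p : ι → ℕ) (m : (ι ⊕ Fin 2) →₀ ℕ) :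
    LGroup ι p :=
  (∑ i : ι, m (Sum.inl i) • egen p i) + (m (Sum.inr 0) + m (Sum.inr 1)) • cgen p

def polyCompA {ι : Type} [Fintype ι] [DecidableEq ι] (p : ι → ℕ) (y : LGroup ι p) :
    Submodule ℂ (SPoly ι) where
  carrier := { f | ∀ m, coeff m f ≠ 0 → wtA p m = y }
  add_mem' := by
    intro f g hf hg m hm
    by_cases h : coeff m f = 0
    · refine hg m fun h' => hm ?_
      simp [coeff_add, h, h']
    · exact hf m h
  zero_mem' := by
    intro m hm
    simp at hm
  smul_mem' := by
    intro c f hf m hm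
    refine hf m fun h => hm ?_
    simp [coeff_smul, h]

def SCompA {ι : Type} [Fintype ι] [DecidableEq ι] (p : ι → ℕ) (c0 c1 : ι → ℂ)
    (y : LGroup ι p) : Submodule ℂ (SAlg ι p c0 c1) :=
  (polyCompA p y).map (Ideal.Quotient.mkₐ ℂ (SIdl ι p c0 c1)).toLinearMap

def SVerA {ι : Type} [Fintype ι] [DecidableEq ι] (p : ι → ℕ) (c0 c1 : ι → ℂ)
    (x : LGroup ι p) : Submodule ℂ (SAlg ι p c0 c1) :=
  ⨆ k : ℤ, SCompA p c0 c1 (k • x)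

def SShiftA {ι : Type} [Fintype ι] [DecidableEq ι] (p : ι → ℕ) (c0 c1 : ι → ℂ)
    (y x : LGroup ι p) : Submodule ℂ (SAlg ι p c0 c1) :=
  ⨆ k : ℤ, SCompA p c0 c1 (y + k • x)


/-!
Normal forms in `L` are unique, as the residue maps `L → ℤ/pᵢ` and the degree map
`eᵢ ↦ 1/pᵢ, c ↦ 1` show. So a monomial of weight `∑ aᵢeᵢ + a·c` has `xᵢ`-exponent `aᵢ + pᵢqᵢ`
with `∑ qᵢ + deg_t = a`, and the relations `xᵢ ^ pᵢ = ℓᵢ` turn it into `∏ xᵢ ^ aᵢ` times a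
binary form of degree `a` in `t₀, t₁`. Hence `S_{ac}` is the image of the binary forms of
degree `a`, and `S_{(d+e)c} = S_{dc} · S_{ec}` because binary forms multiply that way. The
`t₀ ^ l * t₁ ^ (a - l)` stay independent in `S`: sending `t₀ ↦ s`, `t₁ ↦ 1` and `xᵢ` to a
`pᵢ`-th root of `ℓᵢ(s, 1)` kills the relations and maps them to the functions `s ↦ s ^ l`.
-/

namespace LGroup

variable {ι : Type} [DecidableEq ι] {p : ι → ℕ}

theorem nsmul_egen_self (i : ι) : p i • egen p i = cgen p := by
  rw [egen, cgen, ← QuotientAddGroup.mk_nsmul, QuotientAddGroup.eq_iff_sub_mem, ← natCast_zsmul]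
  exact AddSubgroup.subset_closure ⟨i, rfl⟩

variable [Fintype ι] {G : Type*} [AddCommGroup G]

def lift (ε : ι → G) (γ : G) (h : ∀ i, p i • ε i = γ) : LGroup ι p →+ G :=
  QuotientAddGroup.lift (LRel ι p)
    (Fintype.linearCombination ℤ (Option.elim' γ ε)).toAddMonoidHom <| by
      rw [LRel, AddSubgroup.closure_le]
      rintro _ ⟨i, rfl⟩
      rw [SetLike.mem_coe, AddMonoidHom.mem_ker, LinearMap.toAddMonoidHom_coe, map_sub,
        map_zsmul, Fintype.linearCombination_apply_single,
        Fintype.linearCombination_apply_single]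
      simp [h]

@[simp]
theorem lift_egen (ε : ι → G) (γ : G) (h : ∀ i, p i • ε i = γ) (i : ι) :
    lift ε γ h (egen p i) = ε i := by
  simp [lift, egen, Fintype.linearCombination_apply_single]

@[simp]
theorem lift_cgen (ε : ι → G) (γ : G) (h : ∀ i, p i • ε i = γ) :
    lift ε γ h (cgen p) = γ := by
  simp [lift, cgen, Fintype.linearCombination_apply_single]

theorem eq_of_sum_nsmul_egen_add_nsmul_cgen_eq (hp : ∀ i, 0 < p i) {a b : ι → ℕ}
    (ha : ∀ i, a i < p i) (hb : ∀ i, b i < p i) {d e : ℕ}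
    (h : ∑ i, a i • egen p i + d • cgen p = ∑ i, b i • egen p i + e • cgen p) :
    a = b ∧ d = e := by
  obtain rfl : a = b := by
    funext i
    have residue := congrArg (lift (fun j => if j = i then (1 : ZMod (p i)) else 0) 0
      (fun j => by split_ifs with hj <;> simp [hj])) h
    simpa [ZMod.natCast_eq_natCast_iff', Nat.mod_eq_of_lt, ha, hb] using residue
  have degree := congrArg (lift (fun i => ((p i : ℚ))⁻¹) 1
    (fun i => by simp [(hp i).ne'])) (add_left_cancel h)
  exact ⟨rfl, by simpa using degree⟩

end LGroup

section Grading

open LGroup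

variable {ι : Type} [Fintype ι] [DecidableEq ι] (p : ι → ℕ)

theorem wtA_zero : wtA p 0 = 0 := by
  simp [wtA]

theorem wtA_add (m m' : (ι ⊕ Fin 2) →₀ ℕ) : wtA p (m + m') = wtA p m + wtA p m' := by
  simp only [wtA, Finsupp.add_apply, add_smul, Finset.sum_add_distrib]
  abel

theorem wtA_single_inl (i : ι) (k : ℕ) :
    wtA p (Finsupp.single (Sum.inl i) k) = k • egen p i := by
  simp [wtA, Finsupp.single_apply]

theorem wtA_single_inr (j : Fin 2) (k : ℕ) :
    wtA p (Finsupp.single (Sum.inr j) k) = k • cgen p := by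
  fin_cases j <;> simp [wtA]

theorem wtA_eq_normalForm (m : (ι ⊕ Fin 2) →₀ ℕ) :
    wtA p m = ∑ i, (m (Sum.inl i) % p i) • egen p i +
      (∑ i, m (Sum.inl i) / p i + m (Sum.inr 0) + m (Sum.inr 1)) • cgen p := by
  have split (i : ι) : m (Sum.inl i) • egen p i =
      (m (Sum.inl i) % p i) • egen p i + (m (Sum.inl i) / p i) • cgen p := by
    rw [← nsmul_egen_self, ← mul_nsmul', ← add_nsmul, Nat.mod_add_div']
  simp only [wtA, split, Finset.sum_add_distrib, add_nsmul, Finset.sum_smul]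
  abel

theorem monomial_mem_polyCompA {m : (ι ⊕ Fin 2) →₀ ℕ} {y : LGroup ι p} (h : wtA p m = y)
    (r : ℂ) : monomial m r ∈ polyCompA p y := by
  intro m' hm'
  rw [coeff_monomial] at hm'
  split_ifs at hm' with hmm'
  · exact hmm' ▸ h
  · exact absurd rfl hm'

instance : SetLike.GradedMonoid (polyCompA p) where
  one_mem := by simpa using monomial_mem_polyCompA p (wtA_zero p) 1
  mul_mem y z f g hf hg m hm := by
    obtain ⟨⟨m₁, m₂⟩, hmm, hne⟩ :=
      Finset.exists_ne_zero_of_sum_ne_zero (by rwa [coeff_mul] at hm)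
    rw [Finset.HasAntidiagonal.mem_antidiagonal] at hmm
    rw [← hmm, wtA_add, hf m₁ (left_ne_zero_of_mul hne), hg m₂ (right_ne_zero_of_mul hne)]

theorem X_inl_mem_polyCompA (i : ι) : X (Sum.inl i) ∈ polyCompA p (egen p i) :=
  monomial_mem_polyCompA p (by rw [wtA_single_inl, one_nsmul]) 1

theorem X_inr_mem_polyCompA (j : Fin 2) : X (Sum.inr j) ∈ polyCompA p (cgen p) :=
  monomial_mem_polyCompA p (by rw [wtA_single_inr, one_nsmul]) 1

theorem polyCompA_le_span_monomial (y : LGroup ι p) :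
    polyCompA p y ≤ Submodule.span ℂ {f | ∃ m, wtA p m = y ∧ monomial m 1 = f} := by
  intro f hf
  rw [f.as_sum]
  refine Submodule.sum_mem _ fun m hm => ?_
  rw [← mul_one (coeff m f), ← smul_eq_mul, ← smul_monomial]
  exact Submodule.smul_mem _ _
    (Submodule.subset_span ⟨m, hf m (mem_support_iff.1 hm), rfl⟩)

variable {p}

theorem wtA_eq_iff_of_lt (hp : ∀ i, 0 < p i) {a : ι → ℕ} (ha : ∀ i, a i < p i)
    (d : ℕ) (m : (ι ⊕ Fin 2) →₀ ℕ) :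
    wtA p m = ∑ i, a i • egen p i + d • cgen p ↔
      (∀ i, m (Sum.inl i) % p i = a i) ∧
        ∑ i, m (Sum.inl i) / p i + m (Sum.inr 0) + m (Sum.inr 1) = d := by
  rw [wtA_eq_normalForm]
  constructor
  · intro h
    obtain ⟨hmod, hdeg⟩ :=
      eq_of_sum_nsmul_egen_add_nsmul_cgen_eq hp (fun i => Nat.mod_lt _ (hp i)) ha h
    exact ⟨congrFun hmod, hdeg⟩
  · rintro ⟨hmod, rfl⟩
    simp only [hmod]

end Grading

section Presentation

variable {ι : Type}

theorem monomial_one_eq_prod [Fintype ι] (m : (ι ⊕ Fin 2) →₀ ℕ) :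
    (monomial m 1 : SPoly ι) = (∏ i, X (Sum.inl i) ^ m (Sum.inl i)) *
      (X (Sum.inr 0) ^ m (Sum.inr 0) * X (Sum.inr 1) ^ m (Sum.inr 1)) := by
  rw [monomial_eq, C_1, one_mul, Finsupp.prod_fintype _ _ (fun _ => pow_zero _),
    Fintype.prod_sum_type, Fin.prod_univ_two]

def linearForm (c0 c1 : ι → ℂ) (i : ι) : SPoly ι :=
  C (c0 i) * X (Sum.inr 0) + C (c1 i) * X (Sum.inr 1)

theorem mk_X_pow_eq_linearForm (p : ι → ℕ) (c0 c1 : ι → ℂ) (i : ι) :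
    Ideal.Quotient.mk (SIdl ι p c0 c1) (X (Sum.inl i) ^ p i) =
      Ideal.Quotient.mk (SIdl ι p c0 c1) (linearForm c0 c1 i) :=
  Ideal.Quotient.eq.2 (Ideal.subset_span ⟨i, rfl⟩)

theorem sIdl_le_ker_aeval (p : ι → ℕ) (c0 c1 : ι → ℂ) {A : Type*} [CommRing A]
    [Algebra ℂ A] (ξ : ι → A) (s₀ s₁ : A) (hξ : ∀ i, ξ i ^ p i = c0 i • s₀ + c1 i • s₁) :
    SIdl ι p c0 c1 ≤ RingHom.ker (aeval (Sum.elim ξ ![s₀, s₁])) := by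
  rw [SIdl, Ideal.span_le]
  rintro _ ⟨i, rfl⟩
  simp [hξ, Algebra.smul_def]

end Presentation

section BinaryForms

variable (ι : Type)

def binaryForms (d : ℕ) : Submodule ℂ (SPoly ι) :=
  Submodule.span ℂ
    (Set.range fun l : Fin (d + 1) => X (Sum.inr 0) ^ (l : ℕ) * X (Sum.inr 1) ^ (d - l))

variable {ι}

theorem X_pow_mul_X_pow_mem_binaryForms {l k d : ℕ} (h : l + k = d) :
    (X (Sum.inr 0) ^ l * X (Sum.inr 1) ^ k : SPoly ι) ∈ binaryForms ι d := by
  subst h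
  exact Submodule.subset_span ⟨⟨l, by omega⟩, by simp⟩

theorem binaryForms_add (d e : ℕ) :
    binaryForms ι (d + e) = binaryForms ι d * binaryForms ι e := by
  apply le_antisymm
  · refine Submodule.span_le.2 ?_
    rintro _ ⟨⟨l, hl⟩, rfl⟩
    obtain ⟨l₁, l₂, k₁, k₂, h₁, h₂, rfl, hk⟩ : ∃ l₁ l₂ k₁ k₂,
        l₁ + k₁ = d ∧ l₂ + k₂ = e ∧ l = l₁ + l₂ ∧ d + e - l = k₁ + k₂ :=
      ⟨min l d, l - min l d, d - min l d, e - (l - min l d), by omega, by omega, by omega,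
        by omega⟩
    simp only [SetLike.mem_coe, hk, pow_add]
    rw [mul_mul_mul_comm]
    exact Submodule.mul_mem_mul (X_pow_mul_X_pow_mem_binaryForms h₁)
      (X_pow_mul_X_pow_mem_binaryForms h₂)
  · rw [binaryForms, binaryForms, Submodule.span_mul_span]
    refine Submodule.span_le.2 ?_
    rintro _ ⟨_, ⟨⟨l, hl⟩, rfl⟩, _, ⟨⟨l', hl'⟩, rfl⟩, rfl⟩
    simp only [SetLike.mem_coe]
    rw [mul_mul_mul_comm, ← pow_add, ← pow_add]
    exact X_pow_mul_X_pow_mem_binaryForms (by omega)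

instance : SetLike.GradedMonoid (binaryForms ι) where
  one_mem := by simpa using X_pow_mul_X_pow_mem_binaryForms (ι := ι) (zero_add 0)
  mul_mem d e _ _ hf hg := binaryForms_add d e ▸ Submodule.mul_mem_mul hf hg

theorem linearForm_mem_binaryForms (c0 c1 : ι → ℂ) (i : ι) :
    linearForm c0 c1 i ∈ binaryForms ι 1 := by
  have h₀ := X_pow_mul_X_pow_mem_binaryForms (ι := ι) (zero_add 1)
  have h₁ := X_pow_mul_X_pow_mem_binaryForms (ι := ι) (add_zero 1)
  simp only [pow_zero, pow_one, one_mul, mul_one] at h₀ h₁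
  simpa only [linearForm, ← smul_eq_C_mul] using
    Submodule.add_mem _ (Submodule.smul_mem _ (c0 i) h₁) (Submodule.smul_mem _ (c1 i) h₀)

theorem binaryForms_le_polyCompA [Fintype ι] [DecidableEq ι] (p : ι → ℕ) (d : ℕ) :
    binaryForms ι d ≤ polyCompA p (d • cgen p) := by
  refine Submodule.span_le.2 ?_
  rintro _ ⟨⟨l, hl⟩, rfl⟩
  have := SetLike.mul_mem_graded (SetLike.pow_mem_graded l (X_inr_mem_polyCompA p 0))
    (SetLike.pow_mem_graded (d - l) (X_inr_mem_polyCompA p 1))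
  rwa [← add_nsmul, Nat.add_sub_cancel' (by omega)] at this

end BinaryForms

section Components

open LGroup

variable {ι : Type} [Fintype ι] [DecidableEq ι] (p : ι → ℕ) (c0 c1 : ι → ℂ)

local notation "π" => Ideal.Quotient.mk (SIdl ι p c0 c1)

theorem mk_mem_sCompA {y : LGroup ι p} {f : SPoly ι} (hf : f ∈ polyCompA p y) :
    π f ∈ SCompA p c0 c1 y :=
  ⟨f, hf, rfl⟩

theorem sCompA_le_of_forall_monomial {y : LGroup ι p} {N : Submodule ℂ (SAlg ι p c0 c1)}
    (h : ∀ m, wtA p m = y → π (monomial m 1) ∈ N) : SCompA p c0 c1 y ≤ N := by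
  rw [SCompA, Submodule.map_le_iff_le_comap]
  refine (polyCompA_le_span_monomial p y).trans (Submodule.span_le.2 ?_)
  rintro _ ⟨m, hm, rfl⟩
  exact h m hm

instance : SetLike.GradedMonoid (SCompA p c0 c1) where
  one_mem := by simpa using mk_mem_sCompA p c0 c1 (SetLike.one_mem_graded (polyCompA p))
  mul_mem := by
    rintro y z _ _ ⟨f, hf, rfl⟩ ⟨g, hg, rfl⟩
    exact ⟨f * g, SetLike.mul_mem_graded hf hg, map_mul (Ideal.Quotient.mk _) f g⟩

variable {p}

theorem exists_mem_binaryForms_mk_monomial_eq (hp : ∀ i, 0 < p i) {a : ι → ℕ}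
    (ha : ∀ i, a i < p i) {d : ℕ} {m : (ι ⊕ Fin 2) →₀ ℕ}
    (hm : wtA p m = ∑ i, a i • egen p i + d • cgen p) :
    ∃ g ∈ binaryForms ι d, π (monomial m 1) = π (∏ i, X (Sum.inl i) ^ a i) * π g := by
  obtain ⟨hmod, hdeg⟩ := (wtA_eq_iff_of_lt hp ha d m).1 hm
  set q : ι → ℕ := fun i => m (Sum.inl i) / p i
  refine ⟨(∏ i, linearForm c0 c1 i ^ q i) *
    (X (Sum.inr 0) ^ m (Sum.inr 0) * X (Sum.inr 1) ^ m (Sum.inr 1)), ?_, ?_⟩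
  · have hℓ : ∏ i, linearForm c0 c1 i ^ q i ∈ binaryForms ι (∑ i, q i) := by
      simpa using SetLike.prod_pow_mem_graded (binaryForms ι) (fun _ => 1) _
        (F := Finset.univ) q fun i _ => linearForm_mem_binaryForms c0 c1 i
    rw [← hdeg, add_assoc]
    exact SetLike.mul_mem_graded hℓ (X_pow_mul_X_pow_mem_binaryForms rfl)
  · have hsplit (i : ι) : π (X (Sum.inl i) ^ m (Sum.inl i)) =
        π (X (Sum.inl i) ^ a i) * π (linearForm c0 c1 i ^ q i) := by
      rw [← Nat.mod_add_div (m (Sum.inl i)) (p i), hmod, pow_add, pow_mul, map_mul,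
        map_pow _ (X (Sum.inl i) ^ p i), mk_X_pow_eq_linearForm, ← map_pow]
    simp only [monomial_one_eq_prod, map_mul, map_prod, hsplit, Finset.prod_mul_distrib,
      mul_assoc]

theorem sCompA_normalForm_eq_map_mulLeft (hp : ∀ i, 0 < p i) {a : ι → ℕ}
    (ha : ∀ i, a i < p i) (d : ℕ) :
    SCompA p c0 c1 (∑ i, a i • egen p i + d • cgen p) =
      (SCompA p c0 c1 (d • cgen p)).map
        (LinearMap.mulLeft ℂ (π (∏ i, X (Sum.inl i) ^ a i))) := by
  apply le_antisymm
  · refine sCompA_le_of_forall_monomial p c0 c1 fun m hm => ?_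
    obtain ⟨g, hg, hmg⟩ := exists_mem_binaryForms_mk_monomial_eq c0 c1 hp ha hm
    exact ⟨π g, mk_mem_sCompA p c0 c1 (binaryForms_le_polyCompA p d hg), hmg.symm⟩
  · rw [Submodule.map_le_iff_le_comap]
    intro z hz
    refine SetLike.mul_mem_graded (mk_mem_sCompA p c0 c1 ?_) hz
    exact SetLike.prod_pow_mem_graded _ _ _ (F := Finset.univ) a
      fun i _ => X_inl_mem_polyCompA p i

theorem sCompA_nsmul_cgen (hp : ∀ i, 0 < p i) (d : ℕ) :
    SCompA p c0 c1 (d • cgen p) =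
      (binaryForms ι d).map (Ideal.Quotient.mkₐ ℂ (SIdl ι p c0 c1)).toLinearMap := by
  apply le_antisymm
  · refine sCompA_le_of_forall_monomial p c0 c1 fun m hm => ?_
    obtain ⟨g, hg, hmg⟩ :=
      exists_mem_binaryForms_mk_monomial_eq c0 c1 hp hp (a := 0) (by simpa using hm)
    exact ⟨g, hg, by simpa using hmg.symm⟩
  · exact Submodule.map_mono (binaryForms_le_polyCompA p d)

theorem sCompA_nsmul_cgen_eq_span (hp : ∀ i, 0 < p i) (d : ℕ) :
    SCompA p c0 c1 (d • cgen p) = Submodule.span ℂ (Set.range fun l : Fin (d + 1) =>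
      π (X (Sum.inr 0) ^ (l : ℕ) * X (Sum.inr 1) ^ (d - l))) := by
  rw [sCompA_nsmul_cgen c0 c1 hp, binaryForms, Submodule.map_span, ← Set.range_comp]
  rfl

theorem sCompA_add_nsmul_cgen (hp : ∀ i, 0 < p i) (d e : ℕ) :
    SCompA p c0 c1 ((d + e) • cgen p) =
      SCompA p c0 c1 (d • cgen p) * SCompA p c0 c1 (e • cgen p) := by
  simp only [sCompA_nsmul_cgen c0 c1 hp, binaryForms_add, Submodule.map_mul]

theorem sCompA_normalForm_add_nsmul_cgen (hp : ∀ i, 0 < p i) {a : ι → ℕ}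
    (ha : ∀ i, a i < p i) (d e : ℕ) :
    SCompA p c0 c1 (∑ i, a i • egen p i + d • cgen p + e • cgen p) =
      SCompA p c0 c1 (∑ i, a i • egen p i + d • cgen p) * SCompA p c0 c1 (e • cgen p) := by
  refine le_antisymm ?_ (Submodule.mul_le.2 fun _ hy _ hz => SetLike.mul_mem_graded hy hz)
  rw [add_assoc, ← add_nsmul, sCompA_normalForm_eq_map_mulLeft c0 c1 hp ha,
    sCompA_add_nsmul_cgen c0 c1 hp, sCompA_normalForm_eq_map_mulLeft c0 c1 hp ha,
    Submodule.map_le_iff_le_comap, Submodule.mul_le]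
  intro y hy z hz
  rw [Submodule.mem_comap, LinearMap.mulLeft_apply, ← mul_assoc]
  exact Submodule.mul_mem_mul (Submodule.mem_map_of_mem hy) hz

end Components

theorem linearIndependent_pow_fun (K : Type*) [Field K] [Infinite K] (n : ℕ) :
    LinearIndependent K fun l : Fin n => fun s : K => s ^ (l : ℕ) := by
  let ev : Polynomial K →ₗ[K] (K → K) := LinearMap.pi Polynomial.leval
  have hev : LinearMap.ker ev = ⊥ :=
    LinearMap.ker_eq_bot.2 fun P Q h => Polynomial.funext (congrFun h)
  have hpow : ev ∘ Polynomial.basisMonomials K ∘ Fin.val =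
      fun (l : Fin n) (s : K) => s ^ (l : ℕ) := by
    funext l s
    simp [ev]
  exact hpow ▸ ((Polynomial.basisMonomials K).linearIndependent.comp _ Fin.val_injective).map'
    ev hev

theorem linearIndependent_mk_binaryMonomials {ι : Type} {p : ι → ℕ} (c0 c1 : ι → ℂ)
    (hp : ∀ i, 0 < p i) (d : ℕ) :
    LinearIndependent ℂ fun l : Fin (d + 1) =>
      Ideal.Quotient.mk (SIdl ι p c0 c1) (X (Sum.inr 0) ^ (l : ℕ) * X (Sum.inr 1) ^ (d - l)) := by
  choose ρ hρ using fun i (s : ℂ) => IsAlgClosed.exists_pow_nat_eq (c0 i * s + c1 i) (hp i)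
  let ev : SAlg ι p c0 c1 →ₐ[ℂ] (ℂ → ℂ) :=
    Ideal.Quotient.liftₐ _ (aeval (Sum.elim ρ ![id, 1]))
      fun _ hf => sIdl_le_ker_aeval p c0 c1 ρ id 1 (fun i => funext fun s => by simp [hρ]) hf
  have hev (f : SPoly ι) : ev (Ideal.Quotient.mk _ f) = aeval (Sum.elim ρ ![id, 1]) f := rfl
  have hpow : ev.toLinearMap ∘ (fun l : Fin (d + 1) =>
      Ideal.Quotient.mk (SIdl ι p c0 c1) (X (Sum.inr 0) ^ (l : ℕ) * X (Sum.inr 1) ^ (d - l))) =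
      fun (l : Fin (d + 1)) (s : ℂ) => s ^ (l : ℕ) := by
    funext l s
    simp [hev]
  exact LinearIndependent.of_comp ev.toLinearMap (hpow ▸ linearIndependent_pow_fun ℂ (d + 1))

theorem component_normal_form_structure_general (n : ℕ) (p : Fin n → ℕ)
    (hp : ∀ i, 2 ≤ p i)
    (c0 c1 : Fin n → ℂ)
    (a : Fin n → ℕ) (ha : ∀ i, a i < p i) (aN : ℕ)
    (x : LGroup (Fin n) p)
    (hxnf : x = (∑ i, a i • egen p i) + aN • cgen p) :
    SCompA p c0 c1 x =
        (SCompA p c0 c1 (aN • cgen p)).map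
          (LinearMap.mulLeft ℂ
            (Ideal.Quotient.mk (SIdl (Fin n) p c0 c1)
              (∏ i : Fin n, X (Sum.inl i) ^ a i))) ∧
      (∀ m : ℕ,
        SCompA p c0 c1 (x + m • cgen p) =
          SCompA p c0 c1 x * SCompA p c0 c1 (m • cgen p)) ∧
      Module.finrank ℂ ↥(SCompA p c0 c1 (aN • cgen p)) = aN + 1 ∧
      LinearIndependent ℂ (fun l : Fin (aN + 1) =>
        Ideal.Quotient.mk (SIdl (Fin n) p c0 c1)
          (X (Sum.inr 0) ^ (l : ℕ) * X (Sum.inr 1) ^ (aN - (l : ℕ)))) ∧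
      Submodule.span ℂ (Set.range (fun l : Fin (aN + 1) =>
          Ideal.Quotient.mk (SIdl (Fin n) p c0 c1)
            (X (Sum.inr 0) ^ (l : ℕ) * X (Sum.inr 1) ^ (aN - (l : ℕ))))) =
        SCompA p c0 c1 (aN • cgen p) := by
  subst hxnf
  have hp₀ (i : Fin n) : 0 < p i := zero_lt_two.trans_le (hp i)
  have hspan := (sCompA_nsmul_cgen_eq_span c0 c1 hp₀ aN).symm
  have hindep := linearIndependent_mk_binaryMonomials c0 c1 hp₀ aN
  refine ⟨sCompA_normalForm_eq_map_mulLeft c0 c1 hp₀ ha aN,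
    sCompA_normalForm_add_nsmul_cgen c0 c1 hp₀ ha aN, ?_, hindep, hspan⟩
  rw [← hspan, finrank_span_eq_card hindep, Fintype.card_fin]

/-- Let `x = ∑ aᵢeᵢ + a·c` be in normal form with `a ≥ 0`. Then
`S_x = (∏ xᵢ^{aᵢ})·S_{ac}`, `S_{x+mc} = S_x·S_{mc}` for `m ≥ 0`, and `S_{ac}` is an
`(a+1)`-dimensional `ℂ`-vector space with basis the images of `t₀^ℓ t₁^{a−ℓ}`. -/
theorem component_normal_form_structure (n : ℕ) (hn : 1 ≤ n) (p : Fin n → ℕ)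
    (hp : ∀ i, 2 ≤ p i)
    (c0 c1 : Fin n → ℂ) (hnz : ∀ i, (c0 i, c1 i) ≠ (0, 0))
    (hdist : ∀ i j : Fin n, i ≠ j → c0 i * c1 j ≠ c1 i * c0 j)
    (a : Fin n → ℕ) (ha : ∀ i, a i < p i) (aN : ℕ)
    (x : LGroup (Fin n) p)
    (hxnf : x = (∑ i, a i • egen p i) + aN • cgen p) :
    SCompA p c0 c1 x =
        (SCompA p c0 c1 (aN • cgen p)).map
          (LinearMap.mulLeft ℂ
            (Ideal.Quotient.mk (SIdl (Fin n) p c0 c1)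
              (∏ i : Fin n, X (Sum.inl i) ^ a i))) ∧
      (∀ m : ℕ,
        SCompA p c0 c1 (x + m • cgen p) =
          SCompA p c0 c1 x * SCompA p c0 c1 (m • cgen p)) ∧
      Module.finrank ℂ ↥(SCompA p c0 c1 (aN • cgen p)) = aN + 1 ∧
      LinearIndependent ℂ (fun l : Fin (aN + 1) =>
        Ideal.Quotient.mk (SIdl (Fin n) p c0 c1)
          (X (Sum.inr 0) ^ (l : ℕ) * X (Sum.inr 1) ^ (aN - (l : ℕ)))) ∧
      Submodule.span ℂ (Set.range (fun l : Fin (aN + 1) =>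
          Ideal.Quotient.mk (SIdl (Fin n) p c0 c1)
            (X (Sum.inr 0) ^ (l : ℕ) * X (Sum.inr 1) ^ (aN - (l : ℕ))))) =
        SCompA p c0 c1 (aN • cgen p) :=
  component_normal_form_structure_general n p hp c0 c1 a ha aN x hxnf
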